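/- arXiv:2505.19351 — 4 statements merged into one kernel-verified Lean document; each statement's English description precedes it below -/
import Mathlib

section
/- The dimension of the linear span of the 2×2 minors of a generic symmetric d×d matrix of indeterminates equals (1/12)·(d+1)·d²·(d−1). Equivalently, the C(C(d,2)+1, 2) many 2×2 minors of a symmetric matrix satisfy exactly C(d,4) independent linear relations among the distinct minors. -/
/-!
Write `x_{ij}` for the variable `X s(i, j)`. A minor with rows `i, j` and columns `k, l` is
alternating in its rows and in its columns, is unchanged by transposition because the matrix is
symmetric, and satisfies a three-term Plücker relation. These relations straighten every minor into
a combination of the minors indexed by semistandard tableaux of shape `(2, 2)`. The standard minors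
are linearly independent: the diagonal monomial `x_{ab} x_{ce}` of the one with rows `(a, b)`,
`(c, e)` occurs in no other standard minor. Finally, the semistandard `(2, 2)`-tableaux with largest
entry `n` number `∑_{a < n} (n - a)²`, so summing over `n < d` gives `d²(d² - 1)/12` of them.
-/

open Finset MvPolynomial

theorem Sym2.eq_and_eq_of_mk_eq_mk_of_le {α : Type*} [LinearOrder α] {a b a' b' : α}
    (h : a ≤ b) (h' : a' ≤ b') (heq : s(a, b) = s(a', b')) : a = a' ∧ b = b' := by
  have hinf := congrArg Sym2.inf heq
  have hsup := congrArg Sym2.sup heq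
  simp only [Sym2.inf_mk, Sym2.sup_mk, inf_of_le_left h, inf_of_le_left h', sup_of_le_right h,
    sup_of_le_right h'] at hinf hsup
  exact ⟨hinf, hsup⟩

theorem Finsupp.single_one_add_single_one_eq_iff {σ : Type*} {x y x' y' : σ} :
    Finsupp.single x 1 + Finsupp.single y 1 = Finsupp.single x' 1 + Finsupp.single y' (1 : ℕ) ↔
      (x = x' ∧ y = y') ∨ (x = y' ∧ y = x') := by
  rw [Finsupp.single_add_single_eq_single_add_single one_ne_zero one_ne_zero]
  simp

theorem MvPolynomial.coeff_X_mul_X {σ R : Type*} [CommSemiring R] [DecidableEq σ]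
    (m : σ →₀ ℕ) (x y : σ) :
    coeff m (X x * X y : MvPolynomial σ R) =
      if Finsupp.single x 1 + Finsupp.single y 1 = m then 1 else 0 := by
  rw [X, X, monomial_mul, coeff_monomial, one_mul]

namespace SymmetricMinors

variable {ι R : Type*} [CommRing R]

noncomputable def symMinor (i j k l : ι) : MvPolynomial (Sym2 ι) R :=
  X s(i, k) * X s(j, l) - X s(i, l) * X s(j, k)

theorem symMinor_self_left (i k l : ι) : (symMinor i i k l : MvPolynomial (Sym2 ι) R) = 0 := by
  unfold symMinor; ring

theorem symMinor_self_right (i j k : ι) : (symMinor i j k k : MvPolynomial (Sym2 ι) R) = 0 := by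
  unfold symMinor; ring

theorem symMinor_swap_rows (i j k l : ι) :
    (symMinor j i k l : MvPolynomial (Sym2 ι) R) = -symMinor i j k l := by
  unfold symMinor; ring

theorem symMinor_swap_cols (i j k l : ι) :
    (symMinor i j l k : MvPolynomial (Sym2 ι) R) = -symMinor i j k l := by
  unfold symMinor; ring

theorem symMinor_transpose (i j k l : ι) :
    (symMinor k l i j : MvPolynomial (Sym2 ι) R) = symMinor i j k l := by
  unfold symMinor
  rw [Sym2.eq_swap (a := k), Sym2.eq_swap (a := l), Sym2.eq_swap (a := k) (b := j),
    Sym2.eq_swap (a := l) (b := i)]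
  ring

theorem symMinor_pluecker (i j k l : ι) :
    (symMinor i j k l : MvPolynomial (Sym2 ι) R) = symMinor i l k j - symMinor i k l j := by
  unfold symMinor
  rw [Sym2.eq_swap (a := l) (b := j), Sym2.eq_swap (a := l) (b := k),
    Sym2.eq_swap (a := k) (b := j)]
  ring

variable [LinearOrder ι]

/-- `(a, b, c, e)` encodes the tableau with rows `(a, b)` and `(c, e)`. -/
def IsStandardTableau (t : ι × ι × ι × ι) : Prop :=
  t.1 ≤ t.2.1 ∧ t.2.2.1 ≤ t.2.2.2 ∧ t.1 < t.2.2.1 ∧ t.2.1 < t.2.2.2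

instance : DecidablePred (IsStandardTableau (ι := ι)) := fun _ => by
  unfold IsStandardTableau; infer_instance

variable (R) in
noncomputable def standardMinor (t : ι × ι × ι × ι) : MvPolynomial (Sym2 ι) R :=
  symMinor t.1 t.2.2.1 t.2.1 t.2.2.2

noncomputable abbrev standardSpan (R ι : Type*) [CommRing R] [LinearOrder ι] :
    Submodule R (MvPolynomial (Sym2 ι) R) :=
  Submodule.span R (Set.range fun t : {t : ι × ι × ι × ι // IsStandardTableau t} =>
    standardMinor R t.1)

theorem standardMinor_mem_standardSpan {a b c e : ι} (h : IsStandardTableau (a, b, c, e)) :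
    symMinor a c b e ∈ standardSpan R ι :=
  Submodule.subset_span ⟨⟨_, h⟩, rfl⟩

theorem symMinor_mem_standardSpan_of_le {i j k l : ι} (hij : i < j) (hkl : k < l) (hik : i ≤ k) :
    symMinor i j k l ∈ standardSpan R ι := by
  rcases le_or_gt j l with hjl | hlj
  · exact standardMinor_mem_standardSpan ⟨hik, hjl, hij, hkl⟩
  rw [symMinor_pluecker]
  refine Submodule.sub_mem _
    (standardMinor_mem_standardSpan ⟨hik, hlj.le, hik.trans_lt hkl, hkl.trans hlj⟩) ?_
  rcases hik.eq_or_lt with rfl | hik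
  · rw [symMinor_self_left]; exact Submodule.zero_mem _
  · exact standardMinor_mem_standardSpan ⟨(hik.trans hkl).le, (hkl.trans hlj).le, hik, hlj⟩

theorem symMinor_mem_standardSpan_of_lt {i j k l : ι} (hij : i < j) (hkl : k < l) :
    symMinor i j k l ∈ standardSpan R ι := by
  rcases le_total i k with hik | hki
  · exact symMinor_mem_standardSpan_of_le hij hkl hik
  · rw [← symMinor_transpose]; exact symMinor_mem_standardSpan_of_le hkl hij hki

theorem symMinor_mem_standardSpan_of_lt_rows {i j : ι} (hij : i < j) (k l : ι) :
    symMinor i j k l ∈ standardSpan R ι := by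
  rcases lt_trichotomy k l with hkl | rfl | hlk
  · exact symMinor_mem_standardSpan_of_lt hij hkl
  · rw [symMinor_self_right]; exact Submodule.zero_mem _
  · rw [← neg_neg (symMinor i j k l), ← symMinor_swap_cols]
    exact Submodule.neg_mem _ (symMinor_mem_standardSpan_of_lt hij hlk)

theorem symMinor_mem_standardSpan (i j k l : ι) : symMinor i j k l ∈ standardSpan R ι := by
  rcases lt_trichotomy i j with hij | rfl | hji
  · exact symMinor_mem_standardSpan_of_lt_rows hij k l
  · rw [symMinor_self_left]; exact Submodule.zero_mem _
  · rw [← neg_neg (symMinor i j k l), ← symMinor_swap_rows]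
    exact Submodule.neg_mem _ (symMinor_mem_standardSpan_of_lt_rows hji k l)

/-- The exponent of the diagonal term `x_{ab} x_{ce}` of `standardMinor R (a, b, c, e)`. -/
noncomputable def diagExponent (t : ι × ι × ι × ι) : Sym2 ι →₀ ℕ :=
  Finsupp.single s(t.1, t.2.1) 1 + Finsupp.single s(t.2.2.1, t.2.2.2) 1

theorem eq_of_diagExponent_eq {t t' : ι × ι × ι × ι} (ht : IsStandardTableau t)
    (ht' : IsStandardTableau t') (h : diagExponent t = diagExponent t') : t = t' := by
  obtain ⟨a, b, c, e⟩ := t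
  obtain ⟨a', b', c', e'⟩ := t'
  obtain ⟨hab, hce, hac, hbe⟩ := ht
  obtain ⟨hab', hce', hac', hbe'⟩ := ht'
  rcases Finsupp.single_one_add_single_one_eq_iff.mp h with ⟨h₁, h₂⟩ | ⟨h₁, h₂⟩
  · obtain ⟨rfl, rfl⟩ := Sym2.eq_and_eq_of_mk_eq_mk_of_le hab hab' h₁
    obtain ⟨rfl, rfl⟩ := Sym2.eq_and_eq_of_mk_eq_mk_of_le hce hce' h₂
    rfl
  · obtain ⟨rfl, -⟩ := Sym2.eq_and_eq_of_mk_eq_mk_of_le hab hce' h₁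
    obtain ⟨rfl, -⟩ := Sym2.eq_and_eq_of_mk_eq_mk_of_le hce hab' h₂
    exact absurd (hac.trans hac') (lt_irrefl _)

theorem antidiag_ne_diagExponent {t t' : ι × ι × ι × ι} (ht : IsStandardTableau t)
    (ht' : IsStandardTableau t') :
    Finsupp.single s(t'.1, t'.2.2.2) 1 + Finsupp.single s(t'.2.2.1, t'.2.1) 1 ≠
      diagExponent t := by
  obtain ⟨a, b, c, e⟩ := t
  obtain ⟨a', b', c', e'⟩ := t'
  obtain ⟨hab, hce, hac, hbe⟩ : a ≤ b ∧ c ≤ e ∧ a < c ∧ b < e := ht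
  obtain ⟨hab', hce', hac', hbe'⟩ : a' ≤ b' ∧ c' ≤ e' ∧ a' < c' ∧ b' < e' := ht'
  intro h
  rcases Finsupp.single_one_add_single_one_eq_iff.mp h with ⟨h₁, h₂⟩ | ⟨h₁, h₂⟩
  · obtain ⟨-, rfl⟩ := Sym2.eq_and_eq_of_mk_eq_mk_of_le (hab'.trans hbe'.le) hab h₁
    have hsup : max c' b' = max c e := congrArg Sym2.sup h₂
    rw [max_eq_right hce] at hsup
    exact (max_le hce' hbe'.le).not_gt (hsup ▸ hbe)
  · obtain ⟨rfl, -⟩ := Sym2.eq_and_eq_of_mk_eq_mk_of_le (hab'.trans hbe'.le) hce h₁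
    have hinf : min c' b' = min a b := congrArg Sym2.inf h₂
    rw [min_eq_left hab] at hinf
    exact (le_min hac'.le hab').not_gt (hinf ▸ hac)

theorem coeff_diagExponent_standardMinor {t t' : ι × ι × ι × ι} (ht : IsStandardTableau t)
    (ht' : IsStandardTableau t') :
    coeff (diagExponent t) (standardMinor R t') = if t' = t then 1 else 0 := by
  classical
  rw [standardMinor, symMinor, coeff_sub, coeff_X_mul_X, coeff_X_mul_X,
    if_neg (antidiag_ne_diagExponent ht ht'), sub_zero]
  exact if_congr ⟨eq_of_diagExponent_eq ht' ht, congrArg diagExponent⟩ rfl rfl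

theorem linearIndependent_standardMinor :
    LinearIndependent R fun t : {t : ι × ι × ι × ι // IsStandardTableau t} =>
      standardMinor R t.1 := by
  refine .of_pairwise_dual_eq_zero_one _ (fun t => lcoeff R (diagExponent t.1)) ?_ ?_
  · intro t t' hne
    rw [lcoeff_apply, coeff_diagExponent_standardMinor t.2 t'.2,
      if_neg (Subtype.coe_ne_coe.mpr hne.symm)]
  · intro t
    rw [lcoeff_apply, coeff_diagExponent_standardMinor t.2 t.2, if_pos rfl]

theorem span_symMinor_eq_standardSpan :
    Submodule.span R {q | ∃ i j k l : ι, q = symMinor i j k l} = standardSpan R ι := by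
  refine le_antisymm (Submodule.span_le.mpr ?_) (Submodule.span_le.mpr ?_)
  · rintro _ ⟨i, j, k, l, rfl⟩
    exact symMinor_mem_standardSpan i j k l
  · rintro _ ⟨t, rfl⟩
    exact Submodule.subset_span ⟨_, _, _, _, rfl⟩

theorem finrank_span_symMinor [Fintype ι] [Nontrivial R] :
    Module.finrank R
        (Submodule.span R {q : MvPolynomial (Sym2 ι) R | ∃ i j k l : ι, q = symMinor i j k l}) =
      Fintype.card {t : ι × ι × ι × ι // IsStandardTableau t} := by
  rw [span_symMinor_eq_standardSpan,
    finrank_span_eq_card (linearIndependent_standardMinor (R := R))]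

def standardTableauxBelow (n : ℕ) : Finset (ℕ × ℕ × ℕ × ℕ) :=
  (range n ×ˢ range n ×ˢ range n ×ˢ range n).filter IsStandardTableau

theorem card_standardTableau_fin (n : ℕ) :
    Fintype.card {t : Fin n × Fin n × Fin n × Fin n // IsStandardTableau t} =
      #(standardTableauxBelow n) := by
  rw [Fintype.card_subtype]
  refine card_bij (fun t _ => ((t.1 : ℕ), (t.2.1 : ℕ), (t.2.2.1 : ℕ), (t.2.2.2 : ℕ)))
    ?_ ?_ ?_
  · rintro ⟨a, b, c, e⟩ ht
    rw [mem_filter_univ] at ht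
    simp only [standardTableauxBelow, IsStandardTableau, mem_filter, mem_product, mem_range]
    exact ⟨⟨a.isLt, b.isLt, c.isLt, e.isLt⟩, ht⟩
  · rintro ⟨a, b, c, e⟩ - ⟨a', b', c', e'⟩ - h
    simp only [Prod.mk.injEq, Fin.val_inj] at h ⊢
    exact h
  · rintro ⟨a, b, c, e⟩ ht
    simp only [standardTableauxBelow, IsStandardTableau, mem_filter, mem_product, mem_range] at ht
    exact ⟨(⟨a, ht.1.1⟩, ⟨b, ht.1.2.1⟩, ⟨c, ht.1.2.2.1⟩, ⟨e, ht.1.2.2.2⟩),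
      mem_filter.mpr ⟨mem_univ _, ht.2⟩, rfl⟩

theorem card_standardTableauxBelow_succ (n : ℕ) :
    #(standardTableauxBelow (n + 1)) =
      #(standardTableauxBelow n) + ∑ a ∈ range n, (n - a) ^ 2 := by
  rw [← card_filter_add_card_filter_not (fun t : ℕ × ℕ × ℕ × ℕ => t.2.2.2 < n)]
  congr 1
  · congr 1
    ext ⟨a, b, c, e⟩
    simp only [standardTableauxBelow, IsStandardTableau, mem_filter, mem_product, mem_range]
    omega
  · have hsq : ∀ a ∈ range n, (n - a) ^ 2 = #(Ico a n ×ˢ Ico (a + 1) (n + 1)) := by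
      intro a _
      rw [card_product, Nat.card_Ico, Nat.card_Ico, sq, Nat.add_sub_add_right]
    rw [sum_congr rfl hsq, ← card_sigma]
    refine card_bij (fun t _ => ⟨t.1, t.2.1, t.2.2.1⟩) ?_ ?_ ?_
    · rintro ⟨a, b, c, e⟩ ht
      simp only [standardTableauxBelow, IsStandardTableau, mem_filter, mem_product, mem_range] at ht
      simp only [mem_sigma, mem_product, mem_range, mem_Ico]
      omega
    · rintro ⟨a, b, c, e⟩ ht ⟨a', b', c', e'⟩ ht' h
      simp only [standardTableauxBelow, IsStandardTableau, mem_filter, mem_product,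
        mem_range] at ht ht'
      simp only [Sigma.mk.inj_iff, heq_eq_eq, Prod.mk.injEq] at h ⊢
      omega
    · rintro ⟨a, b, c⟩ h
      simp only [mem_sigma, mem_product, mem_range, mem_Ico] at h
      refine ⟨(a, b, c, n), ?_, rfl⟩
      simp only [standardTableauxBelow, IsStandardTableau, mem_filter, mem_product, mem_range]
      omega

theorem six_mul_sum_sq (n : ℕ) :
    6 * ∑ a ∈ range n, (n - a) ^ 2 = n * (n + 1) * (2 * n + 1) := by
  induction n with
  | zero => rfl
  | succ n ih =>
    rw [sum_range_succ', mul_add]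
    simp only [Nat.add_sub_add_right, Nat.sub_zero, ih]
    ring

theorem twelve_mul_card_standardTableauxBelow_succ (n : ℕ) :
    12 * #(standardTableauxBelow (n + 1)) = (n + 2) * (n + 1) ^ 2 * n := by
  induction n with
  | zero => rfl
  | succ n ih =>
    have hsq := six_mul_sum_sq (n + 1)
    rw [card_standardTableauxBelow_succ, mul_add, ih]
    linear_combination 2 * hsq

theorem twelve_mul_card_standardTableauxBelow (n : ℕ) :
    12 * #(standardTableauxBelow n) = (n + 1) * n ^ 2 * (n - 1) := by
  cases n with
  | zero => rfl
  | succ n => rw [twelve_mul_card_standardTableauxBelow_succ, Nat.add_sub_cancel]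

end SymmetricMinors

open SymmetricMinors in
/-- the span of the 2×2 minors of a generic symmetric d×d matrix of
indeterminates has dimension (d+1)·d²·(d−1)/12. -/
theorem stmt_4 (d : ℕ) :
    let r : Fin d → Fin d → MvPolynomial (Sym2 (Fin d)) ℚ :=
      fun i j => X (Sym2.mk i j)
    let minors : Set (MvPolynomial (Sym2 (Fin d)) ℚ) :=
      {q | ∃ i j k l : Fin d, q = r i k * r j l - r i l * r j k}
    Module.finrank ℚ ↥(Submodule.span ℚ minors) = (d + 1) * d ^ 2 * (d - 1) / 12 := by
  intro r minors
  have hcard := twelve_mul_card_standardTableauxBelow d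
  calc Module.finrank ℚ (Submodule.span ℚ minors)
      = Fintype.card {t : Fin d × Fin d × Fin d × Fin d // IsStandardTableau t} :=
        finrank_span_symMinor
    _ = #(standardTableauxBelow d) := card_standardTableau_fin d
    _ = (d + 1) * d ^ 2 * (d - 1) / 12 := by omega
end

section
/- The coefficient of z^{d−1} in the power series expansion of 1/((1−z)^{n−d}(1−2z)) equals ∑_{i=0}^{d−1} C(n−1, i), for integers n > d ≥ 1. -/
/-!
With `n - d = m + 1` and `d = k + 1`, the series is the product of
`(1 - z)^{-(m+1)} = ∑ C(m + i, m) z^i` and `(1 - 2z)⁻¹ = ∑ 2^j z^j`, so the coefficient is the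
convolution `∑_{i + j = k} C(m + i, m) 2^j`. Pascal's rule gives the recursion
`∑_{i ≤ k+1} C(N + 1, i) = 2 ∑_{i ≤ k} C(N, i) + C(N, k + 1)` for partial row sums, which is exactly
the recursion in `k` satisfied by the convolution, so both equal `∑_{i ≤ k} C(m + k + 1, i)`.
-/

open PowerSeries Finset

theorem Nat.sum_range_succ_choose_succ (N k : ℕ) :
    ∑ i ∈ range (k + 2), (N + 1).choose i
      = 2 * ∑ i ∈ range (k + 1), N.choose i + N.choose (k + 1) := by
  calc ∑ i ∈ range (k + 2), (N + 1).choose i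
      = ∑ i ∈ range (k + 1), (N.choose i + N.choose (i + 1)) + 1 := by
        simp only [sum_range_succ' _ (k + 1), Nat.choose_succ_succ, Nat.choose_zero_right]
    _ = ∑ i ∈ range (k + 1), N.choose i + ∑ i ∈ range (k + 2), N.choose i := by
        rw [sum_add_distrib, sum_range_succ' (fun i => N.choose i) (k + 1),
          Nat.choose_zero_right, add_assoc]
    _ = 2 * ∑ i ∈ range (k + 1), N.choose i + N.choose (k + 1) := by
        rw [sum_range_succ _ (k + 1)]; ring

theorem Nat.sum_antidiagonal_choose_mul_two_pow (m k : ℕ) :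
    ∑ p ∈ antidiagonal k, (m + p.1).choose m * 2 ^ p.2
      = ∑ i ∈ range (k + 1), (m + k + 1).choose i := by
  induction k with
  | zero => simp
  | succ k ih =>
    simp_rw [Nat.sum_antidiagonal_succ', pow_succ, ← mul_assoc, ← sum_mul, ih,
      Nat.sum_range_succ_choose_succ, ← Nat.choose_symm_add]
    ring_nf

namespace PowerSeries

variable {K : Type*} [Field K]

theorem inv_one_sub_pow_succ_eq_mk (m : ℕ) :
    ((1 - X : K⟦X⟧) ^ (m + 1))⁻¹ = mk fun n => ((m + n).choose m : K) := by
  rw [PowerSeries.inv_eq_iff_mul_eq_one (by simp), ← invOneSubPow_val_succ_eq_mk_add_choose,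
    ← invOneSubPow_inv_eq_one_sub_pow]
  exact (invOneSubPow K (m + 1)).val_inv

theorem inv_one_sub_C_mul_X_eq_mk (a : K) :
    (1 - C a * X : K⟦X⟧)⁻¹ = mk fun n => a ^ n := by
  have hrescale : (mk fun n => a ^ n : K⟦X⟧) = rescale a (mk 1) := by simp [rescale_mk]
  rw [PowerSeries.inv_eq_iff_mul_eq_one (by simp), hrescale, ← rescale_X,
    ← map_one (rescale a), ← map_sub, ← map_mul, mk_one_mul_one_sub_eq_one]

theorem coeff_inv_one_sub_pow_succ_mul_one_sub_C_mul_X (m n : ℕ) (a : K) :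
    coeff n (((1 - X) ^ (m + 1) * (1 - C a * X))⁻¹)
      = ∑ p ∈ antidiagonal n, ((m + p.1).choose m : K) * a ^ p.2 := by
  rw [PowerSeries.mul_inv_rev, mul_comm, inv_one_sub_pow_succ_eq_mk, inv_one_sub_C_mul_X_eq_mk,
    coeff_mul]
  simp only [coeff_mk]

end PowerSeries

/-- the coefficient of z^(d−1) in 1/((1−z)^(n−d)(1−2z)) equals
∑_{i=0}^{d−1} C(n−1, i). -/
theorem stmt_16 (n d : ℕ) (hd : 1 ≤ d) (hdn : d < n) :
    PowerSeries.coeff (R := ℚ) (d - 1)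
        (((1 - PowerSeries.X) ^ (n - d) * (1 - 2 * PowerSeries.X))⁻¹)
      = ∑ i ∈ Finset.range d, ((n - 1).choose i : ℚ) := by
  obtain ⟨k, rfl⟩ : ∃ k, d = k + 1 := ⟨d - 1, by omega⟩
  obtain ⟨m, hm⟩ : ∃ m, n - (k + 1) = m + 1 := ⟨n - (k + 1) - 1, by omega⟩
  have hn : n - 1 = m + k + 1 := by omega
  have hC : (2 : ℚ⟦X⟧) = C 2 := (map_ofNat C 2).symm
  rw [hm, Nat.add_sub_cancel, hn, hC, coeff_inv_one_sub_pow_succ_mul_one_sub_C_mul_X]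
  exact_mod_cast Nat.sum_antidiagonal_choose_mul_two_pow m k
end

section
/- The number of regions of an arrangement of n hyperplanes in general position in real projective space ℙ^{d−1}_ℝ equals ∑_{i=0}^{d−1} C(n−1, i), for n ≥ d ≥ 1. -/
/-!
A cell of a central arrangement is determined by its sign vector. A cell of the arrangement without
`ker (f 0)` is cut in two by `ker (f 0)` exactly when it meets it, and these traces are the cells
of the arrangement restricted to `ker (f 0)`; so the number of cells is the number for the deletion
plus the number for the restriction. General position passes to both (in dimensions `d` and
`d - 1`), so the recursion is Pascal's rule and gives `2 * ∑ i < d, C(n - 1, i)` cells. In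
projective space the image of an antipodal pair of cells `C, -C` is open and connected, and these
images partition the complement of the arrangement, so it has half as many components.
-/

open Function Filter Topology Module
open scoped LinearAlgebra.Projectivization

section SignCell

variable {ι V : Type*} [AddCommGroup V] [Module ℝ V]

def signCell (f : ι → V →ₗ[ℝ] ℝ) (s : ι → Bool) : Set V :=
  {x | ∀ i, 0 < cond (s i) (f i) (-f i) x}

variable {f : ι → V →ₗ[ℝ] ℝ} {s : ι → Bool} {x : V}

lemma apply_ne_zero_of_mem_signCell (hx : x ∈ signCell f s) (i : ι) : f i x ≠ 0 := by
  have hi := hx i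
  cases h : s i <;> simp only [h, cond_true, cond_false, LinearMap.neg_apply] at hi
  · exact (neg_pos.1 hi).ne
  · exact hi.ne'

lemma smul_mem_signCell_iff {c : ℝ} (hc : 0 < c) : c • x ∈ signCell f s ↔ x ∈ signCell f s := by
  simp only [signCell, Set.mem_ofPred_eq, map_smul, smul_eq_mul, mul_pos_iff_of_pos_left hc]

lemma neg_mem_signCell_iff : -x ∈ signCell f s ↔ x ∈ signCell f (fun i => !s i) :=
  forall_congr' fun i => by cases h : s i <;> simp [h]

lemma convex_signCell : Convex ℝ (signCell f s) := by
  simp only [signCell, Set.ofPred_forall]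
  exact convex_iInter fun i => convex_halfSpace_gt (LinearMap.isLinear _) 0

lemma isOpen_signCell [Finite ι] [TopologicalSpace V] (hf : ∀ i, Continuous (f i)) :
    IsOpen (signCell f s) := by
  simp only [signCell, Set.ofPred_forall]
  refine isOpen_iInter_of_finite fun i => isOpen_lt continuous_const ?_
  cases s i
  · simpa using (hf i).neg
  · exact hf i

lemma eventually_add_smul_mem_signCell [Finite ι] (hx : x ∈ signCell f s) (y : V) :
    ∀ᶠ t in 𝓝 (0 : ℝ), x + t • y ∈ signCell f s := by
  refine eventually_all.2 fun i => Tendsto.eventually_const_lt (hx i) ?_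
  have hcont : Continuous fun t : ℝ => cond (s i) (f i) (-f i) (x + t • y) := by
    simp only [map_add, map_smul, smul_eq_mul]
    fun_prop
  simpa using hcont.tendsto 0

lemma exists_mem_signCell_apply_eq_zero {g : V →ₗ[ℝ] ℝ} {y : V} (hx : x ∈ signCell f s)
    (hy : y ∈ signCell f s) (hgx : 0 < g x) (hgy : g y < 0) :
    ∃ z ∈ signCell f s, g z = 0 := by
  have hxy : 0 < g x - g y := by linarith
  refine ⟨(g x / (g x - g y)) • y + (-g y / (g x - g y)) • x,
    convex_signCell hy hx (by positivity) (div_nonneg (by linarith) hxy.le) ?_, ?_⟩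
  · field_simp
    ring
  · simp only [map_add, map_smul, smul_eq_mul]
    field_simp
    ring

lemma mem_signCell_domRestrict {p : Submodule ℝ V} {x : p} :
    x ∈ signCell (fun i => (f i).domRestrict p) s ↔ (x : V) ∈ signCell f s :=
  forall_congr' fun i => by cases s i <;> rfl

lemma signCell_of_isEmpty [IsEmpty ι] : signCell f s = Set.univ :=
  Set.eq_univ_of_forall fun _ => isEmptyElim

lemma signCell_of_subsingleton [Subsingleton V] [Nonempty ι] : signCell f s = ∅ :=
  Set.eq_empty_of_forall_notMem fun x hx =>
    apply_ne_zero_of_mem_signCell hx (Classical.arbitrary ι) (by simp [Subsingleton.elim x 0])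

end SignCell

section Cons

variable {V : Type*} [AddCommGroup V] [Module ℝ V] {n : ℕ} {f : Fin (n + 1) → V →ₗ[ℝ] ℝ}

lemma mem_signCell_cons {b : Bool} {t : Fin n → Bool} {x : V} :
    x ∈ signCell f (Fin.cons b t) ↔ 0 < cond b (f 0) (-f 0) x ∧ x ∈ signCell (Fin.tail f) t := by
  simp [signCell, Fin.forall_fin_succ, Fin.tail]

lemma signCell_cons_nonempty_of_apply_eq_zero (hf0 : f 0 ≠ 0) {t : Fin n → Bool} {x : V}
    (hx : x ∈ signCell (Fin.tail f) t) (hx0 : f 0 x = 0) (b : Bool) :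
    (signCell f (Fin.cons b t)).Nonempty := by
  obtain ⟨y, hy⟩ := LinearMap.surjective hf0 (cond b 1 (-1))
  obtain ⟨ε, hε, hεpos⟩ :=
    ((eventually_add_smul_mem_signCell hx y).filter_mono nhdsWithin_le_nhds).and
      self_mem_nhdsWithin |>.exists (f := 𝓝[>] (0 : ℝ))
  refine ⟨x + ε • y, mem_signCell_cons.2 ⟨?_, hε⟩⟩
  cases b <;> simpa [hx0, hy] using hεpos

end Cons

lemma Fin.ncard_setOf_eq_add_cons_bool {n : ℕ} (P : (Fin (n + 1) → Bool) → Prop) :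
    {s | P s}.ncard = {t | P (Fin.cons true t)}.ncard + {t | P (Fin.cons false t)}.ncard := by
  have hsplit : {s | P s} = Fin.cons true '' {t | P (Fin.cons true t)} ∪
      Fin.cons false '' {t | P (Fin.cons false t)} := by
    ext s
    rw [← Fin.cons_self_tail s]
    cases s 0 <;> simp [Fin.cons_right_injective _ |>.eq_iff]
  have hdisj : Disjoint (α := Set (Fin (n + 1) → Bool)) (Fin.cons true '' {t | P (Fin.cons true t)})
      (Fin.cons false '' {t | P (Fin.cons false t)}) := by
    rw [Set.disjoint_left]
    rintro _ ⟨t, -, rfl⟩ ⟨t', -, h⟩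
    simpa using congrFun h 0
  rw [hsplit, Set.ncard_union_eq hdisj,
    Set.ncard_image_of_injective _ (Fin.cons_right_injective _),
    Set.ncard_image_of_injective _ (Fin.cons_right_injective _)]

lemma Set.ncard_eq_two_mul_of_map_not_mem_iff {ι : Type*} [Finite ι] {A : Set (ι → Bool)}
    (hA : ∀ s, (fun i => !s i) ∈ A ↔ s ∈ A) (i₀ : ι) :
    A.ncard = 2 * {s ∈ A | s i₀ = true}.ncard := by
  have hnot : Involutive fun (s : ι → Bool) i => !s i := fun s => by simp
  have hfalse : {s ∈ A | s i₀ = false} = (fun s i => !s i) '' {s ∈ A | s i₀ = true} := by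
    rw [hnot.image_eq_preimage_symm]
    ext s
    simp [hA]
  have hsplit : A = {s ∈ A | s i₀ = true} ∪ {s ∈ A | s i₀ = false} := by
    ext s
    cases h : s i₀ <;> simp [h]
  nth_rw 1 [hsplit]
  rw [Set.ncard_union_eq, hfalse, Set.ncard_image_of_injective _ hnot.injective, two_mul]
  exact Set.disjoint_left.2 fun s h1 h2 => Bool.noConfusion (h1.2.symm.trans h2.2)

section DeletionRestriction

variable {V : Type*} [AddCommGroup V] [Module ℝ V] {n : ℕ}

def restrictKer (f : Fin (n + 1) → V →ₗ[ℝ] ℝ) : Fin n → LinearMap.ker (f 0) →ₗ[ℝ] ℝ :=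
  fun i => (f i.succ).domRestrict (LinearMap.ker (f 0))

theorem ncard_signCell_nonempty_eq_add (f : Fin (n + 1) → V →ₗ[ℝ] ℝ) (hf0 : f 0 ≠ 0) :
    {s | (signCell f s).Nonempty}.ncard =
      {t | (signCell (Fin.tail f) t).Nonempty}.ncard +
        {t | (signCell (restrictKer f) t).Nonempty}.ncard := by
  set A : Bool → Set (Fin n → Bool) := fun b => {t | (signCell f (Fin.cons b t)).Nonempty}
  have hunion : A true ∪ A false = {t | (signCell (Fin.tail f) t).Nonempty} := by
    ext t
    refine ⟨by rintro (⟨x, hx⟩ | ⟨x, hx⟩) <;> exact ⟨x, (mem_signCell_cons.1 hx).2⟩, ?_⟩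
    rintro ⟨x, hx⟩
    rcases lt_trichotomy (f 0 x) 0 with hneg | hzero | hpos
    · exact .inr ⟨x, mem_signCell_cons.2 ⟨by simpa using hneg, hx⟩⟩
    · exact .inl (signCell_cons_nonempty_of_apply_eq_zero hf0 hx hzero true)
    · exact .inl ⟨x, mem_signCell_cons.2 ⟨by simpa using hpos, hx⟩⟩
  have hinter : A true ∩ A false =
      {t | (signCell (restrictKer f) t).Nonempty} := by
    ext t
    constructor
    · rintro ⟨⟨x, hx⟩, ⟨y, hy⟩⟩
      rw [mem_signCell_cons] at hx hy
      obtain ⟨z, hz, hz0⟩ :=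
        exists_mem_signCell_apply_eq_zero hx.2 hy.2 (by simpa using hx.1) (by simpa using hy.1)
      exact ⟨⟨z, hz0⟩, mem_signCell_domRestrict.2 hz⟩
    · rintro ⟨x, hx⟩
      have hx' : (x : V) ∈ signCell (Fin.tail f) t := mem_signCell_domRestrict.1 hx
      exact ⟨signCell_cons_nonempty_of_apply_eq_zero hf0 hx' x.2 true,
        signCell_cons_nonempty_of_apply_eq_zero hf0 hx' x.2 false⟩
  rw [Fin.ncard_setOf_eq_add_cons_bool, ← Set.ncard_union_add_ncard_inter, hunion, hinter]

end DeletionRestriction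

section GeneralPosition

variable {ι V : Type*} [AddCommGroup V] [Module ℝ V]

/-- For `d ≤ finrank ℝ V` this says that any `d` of the functionals are linearly independent. -/
def GeneralPosition (d : ℕ) (f : ι → V →ₗ[ℝ] ℝ) : Prop :=
  ∀ s : Finset ι, s.card ≤ d → ∀ t : ι → ℝ, ∃ x : V, ∀ i ∈ s, f i x = t i

lemma GeneralPosition.ne_zero {d : ℕ} {f : ι → V →ₗ[ℝ] ℝ} (hf : GeneralPosition (d + 1) f)
    (i : ι) : f i ≠ 0 := by
  intro h
  obtain ⟨x, hx⟩ := hf {i} (by simp) 1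
  simpa [h] using hx i (by simp)

variable {n d : ℕ} {f : Fin (n + 1) → V →ₗ[ℝ] ℝ}

lemma GeneralPosition.tail (hf : GeneralPosition d f) : GeneralPosition d (Fin.tail f) := by
  intro s hs t
  obtain ⟨x, hx⟩ := hf (s.map (Fin.succEmb n)) (by simpa using hs) (Fin.cons 0 t)
  exact ⟨x, fun i hi => by simpa [Fin.tail] using hx i.succ (by simpa using hi)⟩

lemma GeneralPosition.restrictKer (hf : GeneralPosition (d + 1) f) :
    GeneralPosition d (restrictKer f) := by
  intro s hs t
  obtain ⟨x, hx⟩ := hf (Finset.cons 0 (s.map (Fin.succEmb n)) (by simp)) (by simpa using hs)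
    (Fin.cons 0 t)
  exact ⟨⟨x, by simpa using hx 0 (by simp)⟩,
    fun i hi => by simpa [_root_.restrictKer] using hx i.succ (by simp [hi])⟩

end GeneralPosition

lemma Nat.sum_range_choose_succ_left (n d : ℕ) :
    ∑ i ∈ Finset.range (d + 1), (n + 1).choose i =
      ∑ i ∈ Finset.range (d + 1), n.choose i + ∑ i ∈ Finset.range d, n.choose i := by
  rw [Finset.sum_range_succ' _ d, Finset.sum_range_succ' n.choose d]
  simp only [Nat.choose_succ_succ', Finset.sum_add_distrib, Nat.choose_zero_right]
  ring

theorem ncard_signCell_nonempty {V : Type*} [AddCommGroup V] [Module ℝ V] [FiniteDimensional ℝ V]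
    {n d : ℕ} (hV : finrank ℝ V = d) {f : Fin (n + 1) → V →ₗ[ℝ] ℝ} (hf : GeneralPosition d f) :
    {s | (signCell f s).Nonempty}.ncard = 2 * ∑ i ∈ Finset.range d, n.choose i := by
  induction n generalizing V d with
  | zero =>
    rcases d with _ | d
    · have := finrank_zero_iff.1 hV
      simp [signCell_of_subsingleton]
    rw [ncard_signCell_nonempty_eq_add f (hf.ne_zero 0)]
    simp [signCell_of_isEmpty, Finset.sum_range_succ']
  | succ n ih =>
    rcases d with _ | d
    · have := finrank_zero_iff.1 hV
      simp [signCell_of_subsingleton]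
    have hker : finrank ℝ (LinearMap.ker (f 0)) = d := by
      have := Module.Dual.finrank_ker_add_one_of_ne_zero (hf.ne_zero 0)
      omega
    rw [ncard_signCell_nonempty_eq_add f (hf.ne_zero 0), ih hV hf.tail,
      ih hker hf.restrictKer, Nat.sum_range_choose_succ_left]
    ring

theorem card_connectedComponents_eq_card_range {α β : Type*} [TopologicalSpace α] (P : α → β)
    (hopen : ∀ b, IsOpen (P ⁻¹' {b})) (hconn : ∀ b, IsPreconnected (P ⁻¹' {b})) :
    Nat.card (ConnectedComponents α) = Nat.card (Set.range P) := by
  let _ : TopologicalSpace β := ⊥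
  have : DiscreteTopology β := ⟨rfl⟩
  have hP : Continuous P := continuous_discrete_rng.2 hopen
  have hinj : Injective hP.connectedComponentsLift := by
    refine ConnectedComponents.surjective_coe.forall₂.2 fun x y hxy => ?_
    rw [hP.connectedComponentsLift_apply_coe, hP.connectedComponentsLift_apply_coe] at hxy
    exact ConnectedComponents.coe_eq_coe'.2 ((hconn (P y)).subset_connectedComponent rfl hxy)
  rw [← hP.connectedComponentsLift_comp_coe, ConnectedComponents.surjective_coe.range_comp,
    Nat.card_range_of_injective hinj]

section Projective

variable {ι V : Type*} [AddCommGroup V] [Module ℝ V] {f : ι → V →ₗ[ℝ] ℝ} {s : ι → Bool} {x : V}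

noncomputable def signVector (f : ι → V →ₗ[ℝ] ℝ) (x : V) : ι → Bool := fun i => decide (0 < f i x)

lemma mem_signCell_iff_signVector_eq (hx : ∀ i, f i x ≠ 0) :
    x ∈ signCell f s ↔ signVector f x = s := by
  refine (forall_congr' fun i => ?_).trans funext_iff.symm
  cases h : s i
  · simpa [signVector, h] using (hx i).le_iff_lt.symm
  · simp [signVector]

/-- Rescaling the representative by `f i₀` makes `f i₀` positive on it, so that this is a
well-defined set of lines. -/
def projectiveSignCell (f : ι → V →ₗ[ℝ] ℝ) (i₀ : ι) (s : ι → Bool) : Set (ℙ ℝ V) :=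
  {p | f i₀ p.rep • p.rep ∈ signCell f s}

variable {i₀ : ι}

lemma mk_mem_projectiveSignCell_iff (hx : x ≠ 0) :
    Projectivization.mk ℝ x hx ∈ projectiveSignCell f i₀ s ↔ f i₀ x • x ∈ signCell f s := by
  obtain ⟨a, ha⟩ := Projectivization.exists_smul_eq_mk_rep ℝ x hx
  have hrep : f i₀ (Projectivization.mk ℝ x hx).rep • (Projectivization.mk ℝ x hx).rep =
      ((a : ℝ) * a) • (f i₀ x • x) := by
    rw [← ha, Units.smul_def, map_smul, smul_eq_mul, smul_smul, smul_smul]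
    congr 1
    ring
  rw [projectiveSignCell, Set.mem_ofPred_eq, hrep,
    smul_mem_signCell_iff (mul_self_pos.2 a.ne_zero)]

lemma apply_rep_ne_zero_of_mem_projectiveSignCell {p : ℙ ℝ V}
    (hp : p ∈ projectiveSignCell f i₀ s) (i : ι) : f i p.rep ≠ 0 := by
  have := apply_ne_zero_of_mem_signCell hp i
  rw [map_smul, smul_eq_mul] at this
  exact right_ne_zero_of_mul this

lemma projectiveSignCell_eq_range :
    projectiveSignCell f i₀ s = Set.range fun x : {x // x ∈ signCell f s ∧ 0 < f i₀ x} =>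
      Projectivization.mk ℝ x.1 (ne_zero_of_map x.2.2.ne') := by
  ext p
  constructor
  · intro hp
    have hpos : 0 < f i₀ (f i₀ p.rep • p.rep) := by
      rw [map_smul, smul_eq_mul]
      exact mul_self_pos.2 (apply_rep_ne_zero_of_mem_projectiveSignCell hp i₀)
    refine ⟨⟨_, hp, hpos⟩, ?_⟩
    conv_rhs => rw [← p.mk_rep]
    exact (Projectivization.mk_eq_mk_iff' ℝ _ _ _ _).2 ⟨_, rfl⟩
  · rintro ⟨⟨x, hx, hpos⟩, rfl⟩
    exact (mk_mem_projectiveSignCell_iff _).2 ((smul_mem_signCell_iff hpos).2 hx)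

lemma projectiveSignCell_nonempty_iff :
    (projectiveSignCell f i₀ s).Nonempty ↔ (signCell f s).Nonempty ∧ s i₀ = true := by
  rw [projectiveSignCell_eq_range, Set.range_nonempty_iff_nonempty, nonempty_subtype]
  constructor
  · rintro ⟨x, hx, hpos⟩
    refine ⟨⟨x, hx⟩, ?_⟩
    have := hx i₀
    cases h : s i₀
    · simp only [h, cond_false, LinearMap.neg_apply] at this
      linarith
    · rfl
  · rintro ⟨⟨x, hx⟩, hs⟩
    exact ⟨x, hx, by simpa [hs] using hx i₀⟩

variable [TopologicalSpace V]

noncomputable local instance : TopologicalSpace (ℙ ℝ V) := instTopologicalSpaceQuotient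

lemma isOpen_projectiveSignCell [Finite ι] [IsTopologicalAddGroup V] [ContinuousSMul ℝ V]
    (hf : ∀ i, Continuous (f i)) : IsOpen (projectiveSignCell f i₀ s) := by
  have hcont : Continuous fun w : {v : V // v ≠ 0} => f i₀ w.1 • w.1 := by fun_prop
  refine isOpen_coinduced.2 ?_
  convert (isOpen_signCell hf).preimage hcont using 1
  ext w
  exact mk_mem_projectiveSignCell_iff w.2

lemma isPreconnected_projectiveSignCell [IsTopologicalAddGroup V] [ContinuousSMul ℝ V] :
    IsPreconnected (projectiveSignCell f i₀ s) := by
  have hconv : Convex ℝ {x | x ∈ signCell f s ∧ 0 < f i₀ x} :=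
    convex_signCell.inter (convex_halfSpace_gt (f i₀).isLinear 0)
  have : PreconnectedSpace {x // x ∈ signCell f s ∧ 0 < f i₀ x} :=
    Subtype.preconnectedSpace hconv.isPreconnected
  rw [projectiveSignCell_eq_range]
  exact isPreconnected_range (continuous_quotient_mk'.comp
    (continuous_subtype_val.subtype_mk _))

theorem two_mul_card_connectedComponents [Finite ι] [IsTopologicalAddGroup V]
    [ContinuousSMul ℝ V] (hf : ∀ i, Continuous (f i)) (i₀ : ι) :
    2 * Nat.card (ConnectedComponents {p : ℙ ℝ V | ∀ i, f i p.rep ≠ 0}) =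
      {s | (signCell f s).Nonempty}.ncard := by
  set X := {p : ℙ ℝ V | ∀ i, f i p.rep ≠ 0}
  let σ : X → ι → Bool := fun p => signVector f (f i₀ p.1.rep • p.1.rep)
  have hσ : ∀ s, σ ⁻¹' {s} = Subtype.val ⁻¹' projectiveSignCell f i₀ s := by
    refine fun s => Set.ext fun p => (mem_signCell_iff_signVector_eq fun i => ?_).symm
    rw [map_smul, smul_eq_mul]
    exact mul_ne_zero (p.2 i₀) (p.2 i)
  have hsub : ∀ s, projectiveSignCell f i₀ s ⊆ X := fun s p hp =>
    apply_rep_ne_zero_of_mem_projectiveSignCell hp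
  have hrange : Set.range σ = {s | (signCell f s).Nonempty ∧ s i₀ = true} := by
    ext s
    rw [Set.mem_ofPred_eq, ← projectiveSignCell_nonempty_iff, ← Set.preimage_singleton_nonempty,
      hσ, ← Set.image_nonempty, Subtype.image_preimage_coe, Set.inter_eq_right.2 (hsub s)]
  have hopen : ∀ s, IsOpen (σ ⁻¹' {s}) := fun s => by
    rw [hσ]
    exact (isOpen_projectiveSignCell hf).preimage continuous_subtype_val
  have hconn : ∀ s, IsPreconnected (σ ⁻¹' {s}) := fun s => by
    rw [hσ, ← Topology.IsInducing.subtypeVal.isPreconnected_image, Subtype.image_preimage_coe,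
      Set.inter_eq_right.2 (hsub s)]
    exact isPreconnected_projectiveSignCell
  have hsymm : ∀ s, (signCell f fun i => !s i).Nonempty ↔ (signCell f s).Nonempty := fun s =>
    ⟨fun ⟨x, hx⟩ => ⟨-x, neg_mem_signCell_iff.2 hx⟩,
      fun ⟨x, hx⟩ => ⟨-x, neg_mem_signCell_iff.1 (by rwa [neg_neg])⟩⟩
  rw [card_connectedComponents_eq_card_range σ hopen hconn, Nat.card_coe_set_eq, hrange,
    Set.ncard_eq_two_mul_of_map_not_mem_iff (A := {s | (signCell f s).Nonempty}) hsymm i₀]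
  rfl

end Projective

lemma Matrix.mulVec_surjective_of_linearIndependent_rows {m n K : Type*} [Fintype m] [Fintype n]
    [Field K] {A : Matrix m n K} (hA : LinearIndependent K A) : Surjective A.mulVec := by
  have hrange : LinearMap.range A.mulVecLin = ⊤ := by
    apply Submodule.eq_top_of_finrank_eq
    rw [← Matrix.rank, Matrix.rank_eq_finrank_span_row, finrank_span_eq_card (b := A.row) hA,
      finrank_fintype_fun_eq_card]
  exact LinearMap.range_eq_top.1 hrange

lemma generalPosition_dotProduct {ι m : Type*} [Fintype ι] [Fintype m] {d : ℕ}
    (hd : d ≤ Fintype.card ι) (v : ι → m → ℝ)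
    (hv : ∀ S : Finset ι, S.card = d → LinearIndependent ℝ fun i : S => v i) :
    GeneralPosition d fun i => dotProductBilin ℝ ℝ (v i) := by
  intro s hs t
  obtain ⟨S, hsS, hS⟩ := Finset.exists_superset_card_eq hs hd
  obtain ⟨x, hx⟩ := Matrix.mulVec_surjective_of_linearIndependent_rows (hv S hS) fun i => t i
  exact ⟨x, fun i hi => congrFun hx ⟨i, hsS hi⟩⟩

/-- an arrangement of n hyperplanes in general position in
ℙ^{d−1}_ℝ has ∑_{i=0}^{d−1} C(n−1,i) regions. -/
theorem stmt_17 (n d : ℕ) (hd : 1 ≤ d) (hdn : d ≤ n)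
    (v : Fin n → (Fin d → ℝ))
    (hgen : ∀ S : Finset (Fin n), S.card = d →
      LinearIndependent ℝ (fun i : S => v i)) :
    letI : TopologicalSpace (ℙ ℝ (Fin d → ℝ)) := instTopologicalSpaceQuotient
    Nat.card (ConnectedComponents
        ↥{p : ℙ ℝ (Fin d → ℝ) | ∀ i : Fin n, (∑ j, v i j * p.rep j) ≠ 0})
      = ∑ i ∈ Finset.range d, (n - 1).choose i := by
  obtain ⟨n, rfl⟩ : ∃ m, n = m + 1 := ⟨n - 1, by omega⟩
  let f : Fin (n + 1) → (Fin d → ℝ) →ₗ[ℝ] ℝ := fun i => dotProductBilin ℝ ℝ (v i)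
  have hf : GeneralPosition d f := generalPosition_dotProduct (by simpa using hdn) v hgen
  have hcount := two_mul_card_connectedComponents (fun i => (f i).continuous_of_finiteDimensional) 0
  rw [ncard_signCell_nonempty (finrank_fin_fun ℝ) hf] at hcount
  rw [Nat.add_sub_cancel]
  exact Nat.eq_of_mul_eq_mul_left two_pos hcount
end

section
/- Let B ∈ ℝ^{(n−d)×n} with columns b₁,…,b_n. Suppose s = e_n (the n-th standard basis vector) and consider the matrix M whose rows are s, (y₁²,…,y_n²), and B·diag(y₁,…,y_n). Then the ideal generated by the maximal (n−d+2)-minors of M in ℝ[y₁,…,y_n] equals the ideal generated by the maximal (n−d+1)-minors of the matrix B^{(n)}·Y^{(n)}, where B^{(n)} is the (n−d+1)×(n−1) matrix with first row (y₁,…,y_{n−1}) and remaining rows (b₁,…,b_{n−1}), and Y^{(n)} = diag(y₁,…,y_{n−1}) — after setting y_n = 1. -/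
/-!
A maximal minor of `M` avoiding column `n` vanishes, since its first row is a restriction of `e_n`
missing the only nonzero entry. Expanding any other one along its first row gives, up to sign, a
maximal minor of `M` with its first row and `n`-th column removed, and each such minor arises in
this way. With `y_n = 1` this smaller matrix is exactly `B⁽ⁿ⁾ Y⁽ⁿ⁾`.
-/

open MvPolynomial

namespace Matrix

variable {R ι κ : Type*} [CommRing R] {k : ℕ}

def maximalMinorsIdeal (A : Matrix (Fin k) ι R) : Ideal R :=
  Ideal.span {p | ∃ f : Fin k → ι, Function.Injective f ∧ p = (A.submatrix id f).det}

lemma det_submatrix_mem_maximalMinorsIdeal (A : Matrix (Fin k) ι R) {f : Fin k → ι}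
    (hf : Function.Injective f) : (A.submatrix id f).det ∈ A.maximalMinorsIdeal :=
  Ideal.subset_span ⟨f, hf, rfl⟩

variable [DecidableEq ι] {A : Matrix (Fin (k + 1)) ι R} {c : ι}

lemma det_submatrix_eq_of_row_zero_eq_single (hA : A 0 = Pi.single c 1) {f : Fin (k + 1) → ι}
    (hf : Function.Injective f) {t : Fin (k + 1)} (ht : f t = c) :
    (A.submatrix id f).det = (-1) ^ (t : ℕ) * (A.submatrix Fin.succ (f ∘ t.succAbove)).det := by
  rw [det_succ_row_zero, Finset.sum_eq_single t]
  · simp [hA, ht, submatrix_submatrix]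
  · intro j _ hjt
    have hfj : f j ≠ c := ht ▸ hf.ne hjt
    simp [hA, hfj]
  · simp

lemma det_submatrix_eq_zero_of_row_zero_eq_single (hA : A 0 = Pi.single c 1)
    {f : Fin (k + 1) → ι} (hc : c ∉ Set.range f) : (A.submatrix id f).det = 0 :=
  det_eq_zero_of_row_eq_zero 0 fun j => by
    have hfj : f j ≠ c := fun h => hc ⟨j, h⟩
    simp [hA, hfj]

theorem maximalMinorsIdeal_eq_of_row_zero_eq_single (hA : A 0 = Pi.single c 1) {g : κ → ι}
    (hg : Function.Injective g) (hrange : Set.range g = {c}ᶜ) :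
    A.maximalMinorsIdeal = (A.submatrix Fin.succ g).maximalMinorsIdeal := by
  apply le_antisymm
  · rw [maximalMinorsIdeal, Ideal.span_le]
    rintro p ⟨f, hf, rfl⟩
    by_cases hc : c ∈ Set.range f
    · obtain ⟨t, ht⟩ := hc
      have hrest : ∀ i, f (t.succAbove i) ∈ Set.range g := fun i => by
        rw [hrange]
        exact ht ▸ hf.ne (Fin.succAbove_ne t i)
      choose h hgh using hrest
      replace hgh : g ∘ h = f ∘ t.succAbove := funext hgh
      have hh : Function.Injective h :=
        Function.Injective.of_comp (f := g) (hgh ▸ hf.comp Fin.succAbove_right_injective)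
      rw [det_submatrix_eq_of_row_zero_eq_single hA hf ht, ← hgh]
      exact Ideal.mul_mem_left _ _ (det_submatrix_mem_maximalMinorsIdeal _ hh)
    · rw [det_submatrix_eq_zero_of_row_zero_eq_single hA hc]
      exact Ideal.zero_mem _
  · rw [maximalMinorsIdeal, Ideal.span_le]
    rintro p ⟨h, hh, rfl⟩
    have hcons : Function.Injective (Fin.cons c (g ∘ h) : Fin (k + 1) → ι) := by
      refine Fin.cons_injective_iff.2 ⟨fun hc => ?_, hg.comp hh⟩
      have : c ∈ Set.range g := Set.range_comp_subset_range h g hc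
      simp [hrange] at this
    have hdet := det_submatrix_eq_of_row_zero_eq_single hA hcons (t := 0) rfl
    simp only [Fin.succAbove_zero, Fin.cons_comp_succ, Fin.val_zero, pow_zero, one_mul] at hdet
    exact hdet ▸ det_submatrix_mem_maximalMinorsIdeal A hcons

end Matrix

/-- for s = e_n and after setting y_n = 1, the ideal of maximal
(n−d+2)-minors of M = [s; y²; B·diag(y)] equals the ideal of maximal
(n−d+1)-minors of B⁽ⁿ⁾·Y⁽ⁿ⁾. -/
theorem stmt_19 (n d : ℕ) (hdn : d < n)
    (B : Matrix (Fin (n - d)) (Fin n) ℝ) :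
    let R := MvPolynomial (Fin (n - 1)) ℝ
    let lastIdx : Fin n := ⟨n - 1, by omega⟩
    let y : Fin n → R := fun j => if h : j.1 < n - 1 then X ⟨j.1, h⟩ else 1
    let M : Matrix (Fin (n - d + 2)) (Fin n) R := Matrix.of fun i j =>
      if i.1 = 0 then (if j = lastIdx then 1 else 0)
      else if i.1 = 1 then (y j) ^ 2
      else C (B ⟨i.1 - 2, by have := i.isLt; omega⟩ j) * y j
    let N : Matrix (Fin (n - d + 1)) (Fin (n - 1)) R := Matrix.of fun i j =>
      if i.1 = 0 then X j * X j
      else C (B ⟨i.1 - 1, by have := i.isLt; omega⟩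
               ⟨j.1, by have := j.isLt; omega⟩) * X j
    Ideal.span {p : R | ∃ f : Fin (n - d + 2) → Fin n,
        Function.Injective f ∧ p = (M.submatrix id f).det}
      = Ideal.span {p : R | ∃ g : Fin (n - d + 1) → Fin (n - 1),
        Function.Injective g ∧ p = (N.submatrix id g).det} := by
  intro R lastIdx y M N
  have hM : M 0 = Pi.single lastIdx 1 := funext fun j => by simp [M, Pi.single_apply]
  have hrange : Set.range (Fin.castLE (n := n - 1) (m := n) (by omega)) = {lastIdx}ᶜ := by
    ext j
    simp only [Fin.range_castLE, Set.mem_ofPred_eq, Set.mem_compl_iff, Set.mem_singleton_iff,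
      Fin.ext_iff, lastIdx]
    omega
  have hN : N = M.submatrix Fin.succ (Fin.castLE (by omega)) := by
    refine Matrix.ext fun i j => ?_
    have hy : y (Fin.castLE (by omega) j) = X j := by simp [y]
    simp only [N, M, Matrix.of_apply, Matrix.submatrix_apply, hy, Fin.val_succ]
    rcases Nat.eq_zero_or_pos i.1 with hi | hi
    · simp [hi, sq]
    · simp [hi.ne', Fin.castLE]
  show M.maximalMinorsIdeal = N.maximalMinorsIdeal
  rw [hN]
  exact Matrix.maximalMinorsIdeal_eq_of_row_zero_eq_single hM (Fin.castLE_injective _) hrange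
end
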